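/- Let q be a prime with q ≡ 3 (mod 4) and χ(a) = legendreSym q a, and let p be a prime with p > 3 and p ≠ q. Define the generalized Bernoulli numbers B_{p,χ} := q^{p−1} · Σ_{a=1}^{q−1} χ(a) · B_p(a/q) and B_{1,χ} := Σ_{a=1}^{q−1} χ(a) · (a/q − 1/2), where B_n(x) is the n-th Bernoulli polynomial. Then B_{p,χ}/p ≡ (1 − χ(p)) · B_{1,χ} (mod p): the rational number B_{p,χ}/p − (1 − χ(p))·B_{1,χ} is either 0 or has p-adic valuation ≥ 1. -/

import Mathlib

/-!
Work at level `pq` instead of `q`. Put `S n = ∑_{b<q} χ(b) bⁿ` and `U n = ∑_{a<pq} χ(a) aⁿ`, so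
that `U 1 = p S 1`. Writing `a = qi + j` and using Faulhaber's formula in the form
`∑_{i<p} iᵏ ≡ p B_k (mod p²)` for `0 < k < p` (the `B_j` with `j < p - 1` being `p`-integral by
the same formula) gives `U p ≡ p q B_{p,χ} (mod p³)`. Writing `a = pi + j` instead, the terms with
`p ∣ a` contribute `χ(p) pᵖ S p ≡ 0`, and for `p ∤ j` Fermat gives
`(pi + j)ᵖ ≡ jᵖ + p (pi + j) - pj (mod p³)`; since `∑_i χ(pi + j) = 0` this yields
`U p ≡ p (U 1 - χ(p) p S 1) = (1 - χ(p)) p² S 1 (mod p³)`. As `q B_{1,χ} = S 1`, subtracting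
gives `p² q (B_{p,χ}/p - (1 - χ(p)) B_{1,χ}) ≡ 0 (mod p³)`.
-/

open Finset

theorem ZMod.sum_range_natCast {n : ℕ} [NeZero n] {M : Type*} [AddCommMonoid M]
    (f : ZMod n → M) : ∑ a ∈ range n, f a = ∑ x : ZMod n, f x :=
  sum_nbij' (↑) ZMod.val (fun _ _ => mem_univ _) (fun x _ => mem_range.mpr x.val_lt)
    (fun _ ha => ZMod.val_cast_of_lt (mem_range.mp ha)) (fun x _ => ZMod.natCast_zmod_val x)
    (fun _ _ => rfl)

theorem Finset.sum_range_mul_eq_sum_sum {M : Type*} [AddCommMonoid M] (m n : ℕ) (f : ℕ → M) :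
    ∑ a ∈ range (m * n), f a = ∑ i ∈ range m, ∑ j ∈ range n, f (n * i + j) := by
  induction m with
  | zero => simp
  | succ m ih => rw [Nat.succ_mul, sum_range_add, ih, sum_range_succ, Nat.mul_comm n m]

theorem Finset.sum_Icc_one_eq_sum_range {M : Type*} [AddCommMonoid M] {f : ℕ → M} {n : ℕ}
    (h0 : f 0 = 0) (hn : f n = 0) : ∑ a ∈ Icc 1 n, f a = ∑ a ∈ range n, f a :=
  calc ∑ a ∈ Icc 1 n, f a = f 0 + ∑ a ∈ Ico 1 (n + 1), f a := by
        rw [h0, zero_add, Ico_add_one_right_eq_Icc]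
    _ = ∑ a ∈ range (n + 1), f a := by rw [range_eq_Ico, sum_eq_sum_Ico_succ_bot n.succ_pos]
    _ = ∑ a ∈ range n, f a := by rw [sum_range_succ, hn, add_zero]

theorem MulChar.map_zero_of_ne_one {R R' : Type*} [CommMonoidWithZero R] [CommMonoidWithZero R']
    {χ : MulChar R R'} (hχ : χ ≠ 1) : χ 0 = 0 := by
  by_contra h
  have : Subsingleton R :=
    subsingleton_of_zero_eq_one (isUnit_zero_iff.mp (not_not.mp (mt χ.map_nonunit h)))
  exact hχ (MulChar.ext fun u => by simp [Subsingleton.elim (u : R) 1])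

/-- `PadicDvd p k x` says that `x ∈ p ^ k ℤ_(p)`. -/
def PadicDvd (p k : ℕ) (x : ℚ) : Prop := padicNorm p x ≤ (p : ℚ) ^ (-(k : ℤ))

namespace PadicDvd

variable {p j k : ℕ} {x y : ℚ}

theorem zero : PadicDvd p k 0 := by
  simp only [PadicDvd, padicNorm.zero]
  positivity

theorem neg (hx : PadicDvd p k x) : PadicDvd p k (-x) := by
  rwa [PadicDvd, padicNorm.neg]

variable [hp : Fact p.Prime]

theorem add (hx : PadicDvd p k x) (hy : PadicDvd p k y) : PadicDvd p k (x + y) :=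
  padicNorm.nonarchimedean.trans (max_le hx hy)

theorem sub (hx : PadicDvd p k x) (hy : PadicDvd p k y) : PadicDvd p k (x - y) := by
  simpa only [sub_eq_add_neg] using hx.add hy.neg

theorem sum {ι : Type*} {s : Finset ι} {f : ι → ℚ} (h : ∀ i ∈ s, PadicDvd p k (f i)) :
    PadicDvd p k (∑ i ∈ s, f i) :=
  padicNorm.sum_le' h (by positivity)

theorem mono (h : PadicDvd p k x) (hjk : j ≤ k) : PadicDvd p j x :=
  h.trans <| zpow_le_zpow_right₀ (mod_cast hp.out.one_le) (by omega)

theorem mul (hx : PadicDvd p j x) (hy : PadicDvd p k y) : PadicDvd p (j + k) (x * y) := by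
  rw [PadicDvd, padicNorm.mul, Nat.cast_add, neg_add, zpow_add₀ (mod_cast hp.out.ne_zero)]
  exact mul_le_mul hx hy (padicNorm.nonneg y) (by positivity)

end PadicDvd

section PadicDvd

variable {p j k : ℕ} [hp : Fact p.Prime] {x : ℚ}

theorem padicDvd_intCast_iff {z : ℤ} : PadicDvd p k z ↔ (p : ℤ) ^ k ∣ z := by
  rw [PadicDvd, ← padicNorm.dvd_iff_norm_le, Nat.cast_pow]

theorem padicDvd_intCast (z : ℤ) : PadicDvd p 0 z :=
  padicDvd_intCast_iff.mpr (by simp)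

theorem padicDvd_natCast (n : ℕ) : PadicDvd p 0 n := by
  exact_mod_cast padicDvd_intCast (p := p) n

theorem padicDvd_natCast_of_dvd {n : ℕ} (h : p ^ k ∣ n) : PadicDvd p k n := by
  exact_mod_cast padicDvd_intCast_iff.mpr (by exact_mod_cast h)

theorem padicDvd_pow (k : ℕ) : PadicDvd p k ((p : ℚ) ^ k) := by
  exact_mod_cast padicDvd_intCast_iff.mpr (dvd_refl ((p : ℤ) ^ k))

theorem padicDvd_mul_iff_of_padicNorm_eq {u : ℚ} (hu : padicNorm p u = (p : ℚ) ^ (-(j : ℤ))) :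
    PadicDvd p (j + k) (u * x) ↔ PadicDvd p k x := by
  rw [PadicDvd, PadicDvd, padicNorm.mul, hu, Nat.cast_add, neg_add,
    zpow_add₀ (mod_cast hp.out.ne_zero)]
  exact mul_le_mul_iff_right₀ (zpow_pos (mod_cast hp.out.pos) _)

theorem padicDvd_pow_mul_iff : PadicDvd p (j + k) ((p : ℚ) ^ j * x) ↔ PadicDvd p k x := by
  refine padicDvd_mul_iff_of_padicNorm_eq ?_
  rw [padicNorm.eq_zpow_of_nonzero (by simp [hp.out.ne_zero]), padicValRat.pow,
    padicValRat.self hp.out.one_lt, mul_one]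

theorem padicDvd_natCast_mul_iff {m : ℕ} (hm : ¬p ∣ m) :
    PadicDvd p k (m * x) ↔ PadicDvd p k x := by
  simpa using padicDvd_mul_iff_of_padicNorm_eq (j := 0) (k := k) (x := x)
    (((padicNorm.nat_eq_one_iff m).mpr hm).trans (by simp))

theorem PadicDvd.div_natCast {m : ℕ} (hm : ¬p ∣ m) (h : PadicDvd p k x) :
    PadicDvd p k (x / m) := by
  have hm0 : (m : ℚ) ≠ 0 := Nat.cast_ne_zero.mpr fun h0 => hm (h0 ▸ dvd_zero p)
  rwa [← padicDvd_natCast_mul_iff hm, mul_div_cancel₀ _ hm0]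

theorem padicDvd_iff_eq_zero_or_le_padicValRat :
    PadicDvd p k x ↔ x = 0 ∨ (k : ℤ) ≤ padicValRat p x := by
  rcases eq_or_ne x 0 with rfl | hx
  · simp [PadicDvd.zero]
  · rw [PadicDvd, padicNorm.eq_zpow_of_nonzero hx,
      zpow_le_zpow_iff_right₀ (mod_cast hp.out.one_lt)]
    simp [hx]

end PadicDvd

section Bernoulli

variable {p : ℕ} [hp : Fact p.Prime]

theorem prime_dvd_sum_range_pow {k : ℕ} (hk : k + 1 < p) : p ∣ ∑ m ∈ range p, m ^ k := by
  rw [← ZMod.natCast_eq_zero_iff]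
  push_cast
  rw [ZMod.sum_range_natCast (fun x => x ^ k)]
  exact FiniteField.sum_pow_lt_card_sub_one (K := ZMod p) k (by rw [ZMod.card]; omega)

theorem padicDvd_bernoulli_term (hp3 : 3 ≤ p) {j k : ℕ} (hjk : j < k) (hk : k < p)
    (hB : PadicDvd p 0 (bernoulli j)) :
    PadicDvd p 2 (bernoulli j * (k + 1).choose j * (p : ℚ) ^ (k + 1 - j) / (k + 1)) := by
  have hBC := hB.mul (padicDvd_natCast ((k + 1).choose j))
  rcases (show k + 1 ≤ p by omega).lt_or_eq with hk1 | hk1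
  · have hmain := (hBC.mul (padicDvd_pow (k + 1 - j))).mono (j := 2) (by omega)
    exact_mod_cast hmain.div_natCast (Nat.not_dvd_of_pos_of_lt k.succ_pos hk1)
  · -- the denominator is `p`; one factor `p` comes from `p ^ (k + 1 - j)`
    have hpk : (k : ℚ) + 1 = p := by exact_mod_cast hk1
    rw [hpk, show k + 1 - j = (k - j) + 1 by omega, pow_succ, ← mul_assoc,
      mul_div_cancel_right₀ _ (by exact_mod_cast hp.out.ne_zero)]
    rcases Nat.eq_zero_or_pos j with rfl | hj
    · exact (hBC.mul (padicDvd_pow k)).mono (by omega)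
    · have hC : PadicDvd p 1 ((k + 1).choose j : ℚ) := by
        rw [hk1]
        exact padicDvd_natCast_of_dvd (by simpa using hp.out.dvd_choose_self hj.ne' (by omega))
      exact ((hB.mul hC).mul (padicDvd_pow (k - j))).mono (by omega)

theorem padicDvd_sum_range_pow_sub_mul_bernoulli_of_padicDvd (hp3 : 3 ≤ p) {k : ℕ} (hk : k < p)
    (hB : ∀ j < k, PadicDvd p 0 (bernoulli j)) :
    PadicDvd p 2 (∑ m ∈ range p, (m : ℚ) ^ k - p * bernoulli k) := by
  have hlast : bernoulli k * (k + 1).choose k * (p : ℚ) ^ (k + 1 - k) / (k + 1) =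
      p * bernoulli k := by
    rw [Nat.choose_succ_self_right, Nat.add_sub_cancel_left]
    push_cast
    field_simp
  rw [sum_range_pow, sum_range_succ, hlast, add_sub_cancel_right]
  exact PadicDvd.sum fun j hj =>
    padicDvd_bernoulli_term hp3 (mem_range.1 hj) hk (hB j (mem_range.1 hj))

theorem padicDvd_bernoulli (hp3 : 3 ≤ p) {k : ℕ} (hk : k + 1 < p) :
    PadicDvd p 0 (bernoulli k) := by
  induction k using Nat.strong_induction_on with
  | _ k ih =>
    have hsum : PadicDvd p 1 (∑ m ∈ range p, (m : ℚ) ^ k) := by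
      exact_mod_cast padicDvd_natCast_of_dvd (by simpa using prime_dvd_sum_range_pow hk)
    have hrem := padicDvd_sum_range_pow_sub_mul_bernoulli_of_padicDvd hp3 (by omega)
      fun j hj => ih j hj (by omega)
    have hpB : PadicDvd p (1 + 0) ((p : ℚ) ^ 1 * bernoulli k) := by
      simpa using hsum.sub (hrem.mono (by omega))
    exact padicDvd_pow_mul_iff.mp hpB

theorem padicDvd_sum_range_pow_sub_mul_bernoulli (hp3 : 3 ≤ p) {k : ℕ} (hk : k < p) :
    PadicDvd p 2 (∑ m ∈ range p, (m : ℚ) ^ k - p * bernoulli k) :=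
  padicDvd_sum_range_pow_sub_mul_bernoulli_of_padicDvd hp3 hk fun _ hj =>
    padicDvd_bernoulli hp3 (by omega)

end Bernoulli

theorem Int.prime_pow_three_dvd_add_pow_sub {p : ℕ} (hp : p.Prime) (hp3 : 3 ≤ p) (x j : ℤ)
    (hj : (p : ℤ) ∣ j ^ (p - 1) - 1) :
    (p : ℤ) ^ 3 ∣ ((p * x + j) ^ p - p * (p * x + j)) - (j ^ p - p * j) := by
  have hterm : ∀ k ∈ Ico 2 (p + 1), (p : ℤ) ^ 3 ∣ (p * x) ^ k * j ^ (p - k) * p.choose k := by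
    intro k hk
    rw [mem_Ico] at hk
    rw [mul_pow]
    rcases (show k ≤ p by omega).lt_or_eq with hkp | rfl
    · have hC : (p : ℤ) ∣ p.choose k := by exact_mod_cast hp.dvd_choose_self (by omega) hkp
      exact pow_succ (p : ℤ) 2 ▸ mul_dvd_mul (((pow_dvd_pow _ hk.1).mul_right _).mul_right _) hC
    · exact (((pow_dvd_pow _ hp3).mul_right _).mul_right _).mul_right _
  have hexp : ((p * x + j) ^ p - p * (p * x + j)) - (j ^ p - p * j) =
      p ^ 2 * x * (j ^ (p - 1) - 1) +
        ∑ k ∈ Ico 2 (p + 1), (p * x) ^ k * j ^ (p - k) * p.choose k := by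
    rw [add_pow, range_eq_Ico, sum_eq_sum_Ico_succ_bot (by omega),
      sum_eq_sum_Ico_succ_bot (by omega)]
    simp only [pow_zero, tsub_zero, one_mul, Nat.choose_zero_right, Nat.cast_one, mul_one,
      zero_add, pow_one, Nat.choose_one_right, Nat.reduceAdd]
    ring
  rw [hexp]
  exact dvd_add (pow_succ (p : ℤ) 2 ▸ mul_dvd_mul (dvd_mul_right _ _) hj) (dvd_sum hterm)

section CharacterSums

variable {q : ℕ} (χ : MulChar (ZMod q) ℤ)

def charPowerSum (N n : ℕ) : ℤ := ∑ a ∈ range N, χ a * (a : ℤ) ^ n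

theorem charPowerSum_mul_eq (m n : ℕ) : charPowerSum χ (m * q) n =
    ∑ k ∈ range (n + 1),
      n.choose k * q ^ k * (∑ i ∈ range m, (i : ℤ) ^ k) * charPowerSum χ q (n - k) := by
  simp only [charPowerSum, sum_range_mul_eq_sum_sum, Nat.cast_add, Nat.cast_mul,
    ZMod.natCast_self, zero_mul, zero_add, add_pow, mul_sum, sum_mul]
  rw [sum_congr rfl fun _ _ => sum_comm, sum_comm]
  refine sum_congr rfl fun k _ => ?_
  rw [sum_comm]
  exact sum_congr rfl fun j _ => sum_congr rfl fun i _ => by ring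

variable [NeZero q] {χ}

theorem charPowerSum_zero (hχ : χ ≠ 1) : charPowerSum χ q 0 = 0 := by
  simpa only [charPowerSum, pow_zero, mul_one, ZMod.sum_range_natCast χ] using
    MulChar.sum_eq_zero_of_ne_one hχ

theorem charPowerSum_mul_one (hχ : χ ≠ 1) (m : ℕ) :
    charPowerSum χ (m * q) 1 = m * charPowerSum χ q 1 := by
  simp [charPowerSum_mul_eq, sum_range_succ, charPowerSum_zero hχ]

theorem sum_range_char_mul_add (hχ : χ ≠ 1) {c : ZMod q} (hc : IsUnit c) (d : ZMod q) :
    ∑ i ∈ range q, χ (c * i + d) = 0 := by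
  rw [ZMod.sum_range_natCast (fun x => χ (c * x + d))]
  exact (Fintype.sum_equiv ((Units.mulLeft hc.unit).trans (Equiv.addRight d)) _ χ
    fun _ => rfl).trans (MulChar.sum_eq_zero_of_ne_one hχ)

variable {p : ℕ}

theorem prime_pow_three_dvd_sum_char_mul_add_pow (hχ : χ ≠ 1) (hp : p.Prime) (hp3 : 3 ≤ p)
    (hpq : p.Coprime q) {j : ℕ} (hj0 : 0 < j) (hjp : j < p) :
    (p : ℤ) ^ 3 ∣
      ∑ i ∈ range q, χ (p * i + j) * (((p * i + j : ℕ) : ℤ) ^ p - p * (p * i + j : ℕ)) := by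
  have hfermat : (p : ℤ) ∣ (j : ℤ) ^ (p - 1) - 1 :=
    (Int.ModEq.pow_card_sub_one_eq_one hp (Nat.isCoprime_iff_coprime.mpr
      ((hp.coprime_iff_not_dvd.mpr (Nat.not_dvd_of_pos_of_lt hj0 hjp)).symm))).symm.dvd
  have hshift : ∑ i ∈ range q, χ (p * i + j) = 0 :=
    sum_range_char_mul_add hχ ((ZMod.isUnit_iff_coprime p q).mpr hpq) _
  have hsplit :
      ∑ i ∈ range q, χ (p * i + j) * (((p * i + j : ℕ) : ℤ) ^ p - p * (p * i + j : ℕ)) =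
        ∑ i ∈ range q, χ (p * i + j) *
          ((((p : ℤ) * i + j) ^ p - p * (p * i + j)) - ((j : ℤ) ^ p - p * j)) +
        ((j : ℤ) ^ p - p * j) * ∑ i ∈ range q, χ (p * i + j) := by
    rw [mul_sum, ← sum_add_distrib]
    refine sum_congr rfl fun i _ => ?_
    push_cast
    ring
  rw [hsplit, hshift, mul_zero, add_zero]
  exact dvd_sum fun i _ =>
    dvd_mul_of_dvd_right (Int.prime_pow_three_dvd_add_pow_sub hp hp3 i j hfermat) _

theorem prime_pow_three_dvd_charPowerSum_sub (hχ : χ ≠ 1) (hp : p.Prime) (hp3 : 3 ≤ p)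
    (hpq : p.Coprime q) :
    (p : ℤ) ^ 3 ∣ charPowerSum χ (p * q) p - (1 - χ p) * p ^ 2 * charPowerSum χ q 1 := by
  have hdecomp : ∀ n, charPowerSum χ (p * q) n =
      ∑ j ∈ range p, ∑ i ∈ range q, χ (p * i + j) * ((p * i + j : ℕ) : ℤ) ^ n := fun n => by
    rw [charPowerSum, mul_comm p q, sum_range_mul_eq_sum_sum, sum_comm]
    push_cast
    rfl
  have hzero : ∑ i ∈ range q,
      χ (p * i + (0 : ℕ)) * (((p * i + 0 : ℕ) : ℤ) ^ p - p * (p * i + 0 : ℕ)) =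
        χ p * (p ^ p * charPowerSum χ q p - p ^ 2 * charPowerSum χ q 1) := by
    rw [charPowerSum, charPowerSum, mul_sum, mul_sum, ← sum_sub_distrib, mul_sum]
    refine sum_congr rfl fun i _ => ?_
    push_cast
    rw [add_zero, map_mul]
    ring
  have hsum : charPowerSum χ (p * q) p - (1 - χ p) * p ^ 2 * charPowerSum χ q 1 =
      χ p * p ^ p * charPowerSum χ q p + ∑ j ∈ Ico 1 p,
        ∑ i ∈ range q, χ (p * i + j) * (((p * i + j : ℕ) : ℤ) ^ p - p * (p * i + j : ℕ)) := by
    have hT : charPowerSum χ (p * q) p - p * charPowerSum χ (p * q) 1 = ∑ j ∈ range p,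
        ∑ i ∈ range q, χ (p * i + j) * (((p * i + j : ℕ) : ℤ) ^ p - p * (p * i + j : ℕ)) := by
      rw [hdecomp, hdecomp, mul_sum, ← sum_sub_distrib]
      refine sum_congr rfl fun j _ => ?_
      rw [mul_sum, ← sum_sub_distrib]
      exact sum_congr rfl fun i _ => by ring
    rw [range_eq_Ico, sum_eq_sum_Ico_succ_bot hp.pos, hzero, charPowerSum_mul_one hχ p] at hT
    linear_combination hT
  rw [hsum]
  refine dvd_add (((pow_dvd_pow _ hp3).mul_left _).mul_right _) (dvd_sum fun j hj => ?_)
  rw [mem_Ico] at hj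
  exact prime_pow_three_dvd_sum_char_mul_add_pow hχ hp hp3 hpq hj.1 hj.2

end CharacterSums

section GeneralizedBernoulli

variable {q : ℕ}

noncomputable def genBernoulli (χ : MulChar (ZMod q) ℤ) (n : ℕ) : ℚ :=
  (q : ℚ) ^ (n - 1) * ∑ a ∈ Icc 1 q, (χ a : ℚ) * (Polynomial.bernoulli n).eval ((a : ℚ) / q)

variable [NeZero q] {χ : MulChar (ZMod q) ℤ}

theorem natCast_mul_genBernoulli (hχ : χ ≠ 1) {n : ℕ} (hn : n ≠ 0) :
    q * genBernoulli χ n =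
      ∑ k ∈ range (n + 1), n.choose k * bernoulli k * (q : ℚ) ^ k * charPowerSum χ q (n - k) := by
  have hq : (q : ℚ) ≠ 0 := by exact_mod_cast NeZero.ne q
  have hχ0 := MulChar.map_zero_of_ne_one hχ
  rw [genBernoulli, ← mul_assoc, ← pow_succ', Nat.sub_add_cancel (Nat.one_le_iff_ne_zero.mpr hn),
    sum_Icc_one_eq_sum_range (by simp [hχ0]) (by simp [hχ0]), mul_sum]
  simp only [Polynomial.bernoulli, Polynomial.eval_finsetSum, Polynomial.eval_monomial,
    charPowerSum, mul_sum, Int.cast_sum]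
  rw [sum_comm]
  refine sum_congr rfl fun k hk => sum_congr rfl fun a _ => ?_
  have hkn : k ≤ n := Nat.lt_succ_iff.mp (mem_range.mp hk)
  rw [div_pow, show (q : ℚ) ^ n = q ^ k * q ^ (n - k) by rw [← pow_add, Nat.add_sub_cancel' hkn]]
  push_cast
  field_simp

theorem padicDvd_charPowerSum_sub_mul_genBernoulli (hχ : χ ≠ 1) {p : ℕ} [hp : Fact p.Prime]
    (hp3 : 3 ≤ p) : PadicDvd p 3 (charPowerSum χ (p * q) p - p * (q * genBernoulli χ p)) := by
  have hdiff : (charPowerSum χ (p * q) p : ℚ) - p * (q * genBernoulli χ p) =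
      ∑ k ∈ range (p + 1), (p.choose k * (q : ℚ) ^ k * charPowerSum χ q (p - k)) *
        (∑ i ∈ range p, (i : ℚ) ^ k - p * bernoulli k) := by
    rw [natCast_mul_genBernoulli hχ hp.out.ne_zero, charPowerSum_mul_eq, mul_sum]
    push_cast
    rw [← sum_sub_distrib]
    exact sum_congr rfl fun k _ => by ring
  rw [hdiff]
  refine PadicDvd.sum fun k hk => ?_
  rcases Nat.eq_zero_or_pos k with rfl | hk0
  · simp [PadicDvd.zero]
  rcases (Nat.lt_succ_iff.mp (mem_range.mp hk)).lt_or_eq with hkp | rfl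
  · have hC : PadicDvd p 1 (p.choose k : ℚ) :=
      padicDvd_natCast_of_dvd (by simpa using hp.out.dvd_choose_self hk0.ne' hkp)
    have hq : PadicDvd p 0 ((q : ℚ) ^ k) := by exact_mod_cast padicDvd_natCast (q ^ k)
    exact ((hC.mul hq).mul (padicDvd_intCast _)).mul
      (padicDvd_sum_range_pow_sub_mul_bernoulli hp3 hkp)
  · simp [charPowerSum_zero hχ, PadicDvd.zero]

theorem padicDvd_genBernoulli_div_sub (hχ : χ ≠ 1) {p : ℕ} [hp : Fact p.Prime] (hp3 : 3 ≤ p)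
    (hpq : p.Coprime q) :
    PadicDvd p 1 (genBernoulli χ p / p - (1 - χ p) * genBernoulli χ 1) := by
  have hB1 : q * genBernoulli χ 1 = charPowerSum χ q 1 := by
    simp [natCast_mul_genBernoulli hχ one_ne_zero, sum_range_succ, charPowerSum_zero hχ]
  have hchar : PadicDvd p 3
      (charPowerSum χ (p * q) p - (1 - χ p) * (p : ℚ) ^ 2 * charPowerSum χ q 1) := by
    exact_mod_cast padicDvd_intCast_iff.mpr
      (prime_pow_three_dvd_charPowerSum_sub hχ hp.out hp3 hpq)
  have hbern := padicDvd_charPowerSum_sub_mul_genBernoulli hχ hp3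
  have hcombine : (p : ℚ) ^ 2 * (q * (genBernoulli χ p / p - (1 - χ p) * genBernoulli χ 1)) =
      (charPowerSum χ (p * q) p - (1 - χ p) * (p : ℚ) ^ 2 * charPowerSum χ q 1) -
        (charPowerSum χ (p * q) p - p * (q * genBernoulli χ p)) := by
    rw [← hB1]
    field_simp [hp.out.ne_zero]
    ring
  have hq : ¬p ∣ q := (Nat.Prime.coprime_iff_not_dvd hp.out).mp hpq
  exact (padicDvd_natCast_mul_iff hq).mp (padicDvd_pow_mul_iff.mp (hcombine ▸ hchar.sub hbern))

end GeneralizedBernoulli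

/-- **Kummer-type congruence `B_{p,χ}/p ≡ (1 − χ(p)) B_{1,χ} (mod p)` for the
quadratic character `χ = legendreSym q`, `q ≡ 3 (mod 4)`.** -/
theorem generalized_bernoulli_kummer_congruence
    (q : ℕ) [hqF : Fact q.Prime] (hq4 : q % 4 = 3)
    (p : ℕ) (hp : p.Prime) (hp3 : 3 < p) (hpq : p ≠ q)
    (Bpχ B1χ : ℚ)
    (hBp : Bpχ = (q : ℚ) ^ (p - 1) *
      ∑ a ∈ Finset.Icc 1 (q - 1), (legendreSym q a : ℚ) *
        (Polynomial.bernoulli p).eval ((a : ℚ) / q))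
    (hB1 : B1χ = ∑ a ∈ Finset.Icc 1 (q - 1), (legendreSym q a : ℚ) *
      ((a : ℚ) / q - 1 / 2)) :
    Bpχ / p - (1 - (legendreSym q p : ℚ)) * B1χ = 0 ∨
      1 ≤ padicValRat p (Bpχ / p - (1 - (legendreSym q p : ℚ)) * B1χ) := by
  have : Fact p.Prime := ⟨hp⟩
  set χ : MulChar (ZMod q) ℤ := quadraticChar (ZMod q)
  have hχ : χ ≠ 1 := quadraticChar_ne_one (by rw [ZMod.ringChar_zmod_n]; omega)
  have hlegendre (a : ℕ) : legendreSym q a = χ a := by simp [χ, legendreSym]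
  have hsum (g : ℕ → ℚ) : ∑ a ∈ Icc 1 (q - 1), (legendreSym q a : ℚ) * g a =
      ∑ a ∈ Icc 1 q, (χ a : ℚ) * g a := by
    have htop := sum_Icc_succ_top (show 1 ≤ q - 1 + 1 by omega) fun a : ℕ => (χ a : ℚ) * g a
    rw [Nat.sub_add_cancel hqF.out.one_le] at htop
    simp only [htop, hlegendre, ZMod.natCast_self, MulChar.map_zero, Int.cast_zero, zero_mul,
      add_zero]
  have hBp' : Bpχ = genBernoulli χ p := by rw [hBp, hsum, genBernoulli]
  have hB1' : B1χ = genBernoulli χ 1 := by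
    rw [hB1, hsum, genBernoulli]
    simp
  rw [hBp', hB1', hlegendre]
  exact_mod_cast padicDvd_iff_eq_zero_or_le_padicValRat.mp
    (padicDvd_genBernoulli_div_sub hχ hp3.le ((Nat.coprime_primes hp hqF.out).mpr hpq))
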